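/- The Euler integral of the two-centre problem with centres at 0 and x' is conserved: let x' ∈ ℝ³ \ {0} be fixed, m > 0, ε ∈ ℝ, and let x, y : ℝ → ℝ³ be differentiable with x(t) ∉ {0, x'} for all t, satisfying ẋ(t) = y(t)/m and ẏ(t) = −x(t)/|x(t)|³ + ε·(x' − x(t))/|x' − x(t)|³. Then the function t ↦ 𝒢₀(t) + ε·𝒢₁(t) is constant, where 𝒢₀(t) = |x(t) × y(t)|² − x' · ( y(t) × (x(t) × y(t)) − m·x(t)/|x(t)| ) and 𝒢₁(t) = m·( (x' − x(t)) · x' )/|x' − x(t)|. -/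

import Mathlib

/-!
The first centre exerts a central force, so the angular momentum `C = x × y` changes only through
the force `F = ε (x' - x) / |x' - x|³` of the second centre, `Ċ = x × F`; and the Kepler flow
preserves the Laplace vector `L`, so `L̇ = F × C + y × (x × F)`. Thus `d𝒢₀/dt` is linear in `F`,
and an identity of vector algebra in `ℝ³` shows that `ε d𝒢₁/dt` cancels it.
-/
open scoped Matrix

/-- Euclidean norm on `Fin 3 → ℝ`. -/
noncomputable def norm3 (v : Fin 3 → ℝ) : ℝ := Real.sqrt (v ⬝ᵥ v)

/-- The lowest-order Euler integral `𝒢₀ = |C|² − x'·L` where `C = x × y` is the angular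
momentum and `L = y × C − m x/|x|` is the Laplace (eccentricity) vector. -/
noncomputable def G0 (x' : Fin 3 → ℝ) (m : ℝ) (x y : Fin 3 → ℝ) : ℝ :=
  norm3 (x ⨯₃ y) ^ 2 - x' ⬝ᵥ (y ⨯₃ (x ⨯₃ y) - (m / norm3 x) • x)

/-- The first-order correction `𝒢₁ = m ((x' − x) · x')/|x' − x|`. -/
noncomputable def G1 (x' : Fin 3 → ℝ) (m : ℝ) (x : Fin 3 → ℝ) : ℝ :=
  m * ((x' - x) ⬝ᵥ x') / norm3 (x' - x)

lemma norm3_sq (v : Fin 3 → ℝ) : norm3 v ^ 2 = v ⬝ᵥ v :=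
  Real.sq_sqrt (by simpa using dotProduct_star_self_nonneg v)

lemma norm3_pos {v : Fin 3 → ℝ} (hv : v ≠ 0) : 0 < norm3 v := by
  refine (Real.sqrt_nonneg _).lt_of_ne' fun h => hv ?_
  rw [← dotProduct_self_eq_zero, ← norm3_sq, norm3, h, zero_pow two_ne_zero]

section Deriv

variable {𝕜 : Type*} [NontriviallyNormedField 𝕜] {t : 𝕜}

theorem HasDerivAt.dotProduct {ι : Type*} [Fintype ι] {f g : 𝕜 → ι → 𝕜} {f' g' : ι → 𝕜}
    (hf : HasDerivAt f f' t) (hg : HasDerivAt g g' t) :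
    HasDerivAt (fun s => f s ⬝ᵥ g s) (f' ⬝ᵥ g t + f t ⬝ᵥ g') t := by
  have h := HasDerivAt.fun_sum (u := Finset.univ) fun i _ =>
    (hasDerivAt_pi.1 hf i).mul (hasDerivAt_pi.1 hg i)
  simpa only [_root_.dotProduct, Pi.mul_apply, Finset.sum_add_distrib] using h

theorem HasDerivAt.crossProduct {f g : 𝕜 → Fin 3 → 𝕜} {f' g' : Fin 3 → 𝕜}
    (hf : HasDerivAt f f' t) (hg : HasDerivAt g g' t) :
    HasDerivAt (fun s => f s ⨯₃ g s) (f' ⨯₃ g t + f t ⨯₃ g') t := by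
  have hf' := hasDerivAt_pi.1 hf
  have hg' := hasDerivAt_pi.1 hg
  refine hasDerivAt_pi.2 fun i => ?_
  fin_cases i <;> simp only [cross_apply] <;>
    exact (((hf' _).mul (hg' _)).sub ((hf' _).mul (hg' _))).congr_deriv <| by
      simp only [Fin.isValue, Fin.zero_eta, Fin.mk_one, Fin.reduceFinMk, Pi.add_apply,
        Matrix.cons_val]
      ring

end Deriv

theorem HasDerivAt.norm3 {f : ℝ → Fin 3 → ℝ} {f' : Fin 3 → ℝ} {t : ℝ}
    (hf : HasDerivAt f f' t) (h0 : f t ≠ 0) :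
    HasDerivAt (fun s => norm3 (f s)) ((f' ⬝ᵥ f t) / norm3 (f t)) t := by
  have hne : f t ⬝ᵥ f t ≠ 0 := dotProduct_self_eq_zero.not.2 h0
  refine ((Real.hasDerivAt_sqrt hne).comp t (hf.dotProduct hf)).congr_deriv ?_
  rw [dotProduct_comm (f t) f', _root_.norm3]
  ring

section Motion

variable {x y : ℝ → Fin 3 → ℝ} {m t : ℝ} {F : Fin 3 → ℝ}

theorem hasDerivAt_cross_of_central_force (k : ℝ) (hx : HasDerivAt x (m⁻¹ • y t) t)
    (hy : HasDerivAt y (k • x t + F) t) :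
    HasDerivAt (fun s => x s ⨯₃ y s) (x t ⨯₃ F) t :=
  (hx.crossProduct hy).congr_deriv <| by
    simp only [map_add, map_smul, LinearMap.smul_apply, cross_self, smul_zero, zero_add]

theorem kepler_force_cross_cross {a : Fin 3 → ℝ} (ha : a ≠ 0) (b : Fin 3 → ℝ) :
    -((norm3 a ^ 3)⁻¹ • a) ⨯₃ (a ⨯₃ b) = (norm3 a)⁻¹ • b - ((a ⬝ᵥ b) / norm3 a ^ 3) • a := by
  have hn := (norm3_pos ha).ne'
  rw [cross_cross_eq_smul_sub_smul']
  simp only [neg_dotProduct, dotProduct_neg, smul_dotProduct, dotProduct_smul, smul_eq_mul,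
    ← norm3_sq]
  match_scalars <;> field_simp

noncomputable def laplaceVector (m : ℝ) (x y : Fin 3 → ℝ) : Fin 3 → ℝ :=
  y ⨯₃ (x ⨯₃ y) - (m / norm3 x) • x

theorem hasDerivAt_laplaceVector (hm : m ≠ 0) (h0 : x t ≠ 0) (hx : HasDerivAt x (m⁻¹ • y t) t)
    (hy : HasDerivAt y (-((norm3 (x t) ^ 3)⁻¹ • x t) + F) t) :
    HasDerivAt (fun s => laplaceVector m (x s) (y s))
      (F ⨯₃ (x t ⨯₃ y t) + y t ⨯₃ (x t ⨯₃ F)) t := by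
  have hC := hasDerivAt_cross_of_central_force _ hx (by rwa [← neg_smul] at hy)
  have hn := (norm3_pos h0).ne'
  refine ((hy.crossProduct hC).sub
    (((hasDerivAt_const t m).div (hx.norm3 h0) hn).smul hx)).congr_deriv ?_
  rw [map_add, LinearMap.add_apply, kepler_force_cross_cross h0, smul_dotProduct,
    dotProduct_comm (y t)]
  simp only [Pi.div_apply, smul_eq_mul]
  match_scalars <;> field_simp <;> ring

theorem hasDerivAt_G1 (x' : Fin 3 → ℝ) (m : ℝ) {v : Fin 3 → ℝ} (hx : HasDerivAt x v t)
    (h1 : x t ≠ x') :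
    HasDerivAt (fun s => G1 x' m (x s))
      (m * (((x' - x t) ⬝ᵥ x') * (v ⬝ᵥ (x' - x t)) - (v ⬝ᵥ x') * norm3 (x' - x t) ^ 2)
        / norm3 (x' - x t) ^ 3) t := by
  have hd : HasDerivAt (fun s => x' - x s) (-v) t := hx.const_sub x'
  have hn := (norm3_pos (sub_ne_zero.2 h1.symm)).ne'
  refine (((hd.dotProduct (hasDerivAt_const t x')).const_mul m).div
    (hd.norm3 (sub_ne_zero.2 h1.symm)) hn).congr_deriv ?_
  simp only [neg_dotProduct, dotProduct_zero]
  field_simp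
  ring

/-- With `F = (ε / |x' - a|³) • (x' - a)`, this is `|x' - a|³ / ε` times
`2 C ⬝ᵥ Ċ - x' ⬝ᵥ L̇ + ε 𝒢₁'`, the derivative of the Euler integral. -/
theorem two_centre_identity (x' a b : Fin 3 → ℝ) :
    2 * ((a ⨯₃ b) ⬝ᵥ (a ⨯₃ (x' - a)))
      - x' ⬝ᵥ ((x' - a) ⨯₃ (a ⨯₃ b) + b ⨯₃ (a ⨯₃ (x' - a)))
      + (((x' - a) ⬝ᵥ x') * (b ⬝ᵥ (x' - a)) - (b ⬝ᵥ x') * ((x' - a) ⬝ᵥ (x' - a))) = 0 := by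
  simp only [cross_apply, dotProduct, Fin.sum_univ_three, Fin.isValue, Pi.sub_apply, Pi.add_apply,
    Matrix.cons_val]
  ring

theorem hasDerivAt_euler_integral (x' : Fin 3 → ℝ) {m : ℝ} (ε : ℝ) (hm : m ≠ 0)
    (h0 : x t ≠ 0) (h1 : x t ≠ x') (hx : HasDerivAt x (m⁻¹ • y t) t)
    (hy : HasDerivAt y
      (-((norm3 (x t) ^ 3)⁻¹ • x t) + (ε / norm3 (x' - x t) ^ 3) • (x' - x t)) t) :
    HasDerivAt (fun s => G0 x' m (x s) (y s) + ε * G1 x' m (x s)) 0 t := by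
  have hC := hasDerivAt_cross_of_central_force _ hx (by rwa [← neg_smul] at hy)
  have hL := hasDerivAt_laplaceVector hm h0 hx hy
  have hG1 := (hasDerivAt_G1 x' m hx h1).const_mul ε
  have hG : (fun s => G0 x' m (x s) (y s) + ε * G1 x' m (x s)) = fun s =>
      (x s ⨯₃ y s) ⬝ᵥ (x s ⨯₃ y s) - x' ⬝ᵥ laplaceVector m (x s) (y s) + ε * G1 x' m (x s) := by
    simp only [G0, laplaceVector, norm3_sq]
  rw [hG]
  refine (((hC.dotProduct hC).sub ((hasDerivAt_const t x').dotProduct hL)).add hG1).congr_deriv ?_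
  have key := two_centre_identity x' (x t) (y t)
  have hr := (norm3_pos (sub_ne_zero.2 h1.symm)).ne'
  rw [← norm3_sq] at key
  simp only [map_smul, LinearMap.smul_apply, dotProduct_smul, smul_dotProduct, smul_eq_mul,
    zero_dotProduct, dotProduct_add, dotProduct_comm (x t ⨯₃ (x' - x t))] at key ⊢
  field_simp
  linear_combination ε * key

end Motion

theorem euler_integral_conserved_general (x' : Fin 3 → ℝ) (m ε : ℝ) (hm : 0 < m)
    (x y : ℝ → Fin 3 → ℝ)
    (hcol : ∀ t, x t ≠ 0 ∧ x t ≠ x')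
    (hx : ∀ t, HasDerivAt x (m⁻¹ • y t) t)
    (hy : ∀ t, HasDerivAt y
      (-((norm3 (x t) ^ 3)⁻¹ • x t)
        + (ε / norm3 (x' - x t) ^ 3) • (x' - x t)) t) :
    ∀ s t : ℝ,
      G0 x' m (x s) (y s) + ε * G1 x' m (x s) = G0 x' m (x t) (y t) + ε * G1 x' m (x t) := by
  have hG u := hasDerivAt_euler_integral x' ε hm.ne' (hcol u).1 (hcol u).2 (hx u) (hy u)
  exact is_const_of_deriv_eq_zero (fun u => (hG u).differentiableAt) fun u => (hG u).deriv

/-- the Euler integral `𝒢 = 𝒢₀ + ε 𝒢₁` of the two-centre problem with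
centres at `0` and `x'` is conserved along solutions of the Hamiltonian system of
`h(y,x) = |y|²/(2m) − 1/|x| − ε/|x'−x|`, i.e. `ẋ = y/m`,
`ẏ = −x/|x|³ + ε (x'−x)/|x'−x|³`. -/
theorem euler_integral_conserved (x' : Fin 3 → ℝ) (hx' : x' ≠ 0) (m ε : ℝ) (hm : 0 < m)
    (x y : ℝ → Fin 3 → ℝ)
    (hcol : ∀ t, x t ≠ 0 ∧ x t ≠ x')
    (hx : ∀ t, HasDerivAt x (m⁻¹ • y t) t)
    (hy : ∀ t, HasDerivAt y
      (-((norm3 (x t) ^ 3)⁻¹ • x t)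
        + (ε / norm3 (x' - x t) ^ 3) • (x' - x t)) t) :
    ∀ s t : ℝ,
      G0 x' m (x s) (y s) + ε * G1 x' m (x s) = G0 x' m (x t) (y t) + ε * G1 x' m (x t) :=
  euler_integral_conserved_general x' m ε hm x y hcol hx hy
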